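/- arXiv:2412.00045 — 5 statements merged into one kernel-verified Lean document; each statement's English description precedes it below -/
import Mathlib

section
/- Let n ∈ ℕ, let C : ℝⁿ → ℝ satisfy 0 ≤ C(x) ≤ 1 for all x, and suppose the support {x : C(x) > 0} is bounded. Let f : ℝⁿ → ℝ be continuous, and define g : ℝ → ℝ by g(y) = sSup ({C(x) : f(x) = y} ∪ {0}). Then for every α ∈ [0,1), closure {y ∈ ℝ : g(y) > α} = f '' (closure {x ∈ ℝⁿ : C(x) > α}). -/
/-!
Since `α ≥ 0`, the value `0` added to the supremum never exceeds `α`, so `α < g y` holds exactly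
when some `x` with `f x = y` has `α < C x`: the strict superlevel set of `g` is the image under `f`
of that of `C`. That set of `C` lies in the bounded support, so its closure is compact, and for a
continuous map into a Hausdorff space taking closures commutes with taking images of sets with
compact closure.
-/

open Set

/-- The extension `f_C` of `C` along `f`; the `∪ {0}` encodes `sup ∅ = 0`. -/
noncomputable def possibilityExtension {X Y : Type*} (f : X → Y) (C : X → ℝ) (y : Y) : ℝ :=
  sSup ({t : ℝ | ∃ x, f x = y ∧ C x = t} ∪ {0})

theorem lt_possibilityExtension_iff {X Y : Type*} {f : X → Y} {C : X → ℝ}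
    (hC : BddAbove (range C)) {α : ℝ} (hα : 0 ≤ α) (y : Y) :
    α < possibilityExtension f C y ↔ ∃ x, f x = y ∧ α < C x := by
  have hbdd : BddAbove ({t : ℝ | ∃ x, f x = y ∧ C x = t} ∪ {0}) :=
    (hC.mono <| by rintro _ ⟨x, -, rfl⟩; exact mem_range_self x).union bddAbove_singleton
  rw [possibilityExtension, lt_csSup_iff hbdd (union_nonempty.2 (Or.inr (singleton_nonempty 0)))]
  constructor
  · rintro ⟨t, ⟨x, hfx, rfl⟩ | rfl, hαt⟩
    · exact ⟨x, hfx, hαt⟩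
    · exact absurd hαt hα.not_gt
  · rintro ⟨x, hfx, hαx⟩
    exact ⟨C x, Or.inl ⟨x, hfx, rfl⟩, hαx⟩

theorem setOf_lt_possibilityExtension {X Y : Type*} {f : X → Y} {C : X → ℝ}
    (hC : BddAbove (range C)) {α : ℝ} (hα : 0 ≤ α) :
    {y | α < possibilityExtension f C y} = f '' {x | α < C x} := by
  ext y
  simp only [mem_ofPred_eq, mem_image, lt_possibilityExtension_iff hC hα]
  exact exists_congr fun x => and_comm

/-- Lemma 2: the α-level of the extension of a possibility distribution `C` with
bounded support along a continuous `f` equals the image under `f` of the α-level of `C`. -/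
theorem level_extension_eq_image_level (n : ℕ) (C : (Fin n → ℝ) → ℝ)
    (hC : ∀ x, 0 ≤ C x ∧ C x ≤ 1)
    (hsupp : Bornology.IsBounded {x : Fin n → ℝ | 0 < C x})
    (f : (Fin n → ℝ) → ℝ) (hf : Continuous f)
    (g : ℝ → ℝ)
    (hg : ∀ y, g y = sSup ({t : ℝ | ∃ x, f x = y ∧ C x = t} ∪ {0}))
    (α : ℝ) (hα : α ∈ Set.Ico (0 : ℝ) 1) :
    closure {y : ℝ | α < g y} = f '' closure {x : Fin n → ℝ | α < C x} := by
  have hg' : g = possibilityExtension f C := funext hg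
  have hCbdd : BddAbove (range C) := ⟨1, by rintro _ ⟨x, rfl⟩; exact (hC x).2⟩
  have hcompact : IsCompact (closure {x | α < C x}) :=
    (hsupp.subset fun x hx => hα.1.trans_lt hx).isCompact_closure
  rw [hg', setOf_lt_possibilityExtension hCbdd hα.1]
  exact (image_closure_of_isCompact hcompact hf.continuousOn).symm
end

section
/- Let A : ℝ → ℝ satisfy 0 ≤ A(x) ≤ 1 for all x, let f : ℝ → ℝ be continuous and strictly increasing, and define B : ℝ → ℝ by B(y) = sSup ({A(x) : f(x) = y} ∪ {0}). Let α ∈ (0,1] and suppose {x : A(x) ≥ α} = [l, r] for some real numbers l ≤ r. Then {y : B(y) ≥ α} = [f(l), f(r)]; in particular, the endpoints of the α-level of B are obtained by applying f to the endpoints of the α-level of A. -/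
/-- Theorem 1 (increasing case): if `B` is `f`-correlated to `A` and `f` is
continuous strictly increasing, the endpoints of the α-level of `B` are obtained
by applying `f` to the endpoints of the α-level of `A`. -/
theorem fCorrelated_level_increasing (A : ℝ → ℝ)
    (hA : ∀ x, 0 ≤ A x ∧ A x ≤ 1)
    (f : ℝ → ℝ) (hfc : Continuous f) (hfm : StrictMono f)
    (B : ℝ → ℝ)
    (hB : ∀ y, B y = sSup ({t : ℝ | ∃ x, f x = y ∧ A x = t} ∪ {0}))
    (α : ℝ) (hα : α ∈ Set.Ioc (0:ℝ) 1)
    (l r : ℝ) (hlr : l ≤ r)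
    (hlev : {x : ℝ | α ≤ A x} = Set.Icc l r) :
    {y : ℝ | α ≤ B y} = Set.Icc (f l) (f r) := by
  have hinj := hfm.injective
  have key : ∀ y, (α ≤ B y ↔ ∃ x, f x = y ∧ α ≤ A x) := by
    intro y
    rw [hB y]
    by_cases h : ∃ x, f x = y
    · obtain ⟨x, hx⟩ := h
      have hset : ({t : ℝ | ∃ x, f x = y ∧ A x = t} ∪ {0}) = {A x, 0} := by
        ext t
        simp only [Set.mem_union, Set.mem_setOf_eq, Set.mem_singleton_iff,
          Set.mem_insert_iff]
        constructor
        · rintro (⟨x', hx', rfl⟩ | rfl)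
          · left; rw [hinj (hx'.trans hx.symm)]
          · right; rfl
        · rintro (rfl | rfl)
          · left; exact ⟨x, hx, rfl⟩
          · right; rfl
      rw [hset, csSup_pair]
      have : A x ⊔ 0 = A x := sup_eq_left.mpr (hA x).1
      rw [this]
      constructor
      · intro hαx; exact ⟨x, hx, hαx⟩
      · rintro ⟨x', hx', hαx'⟩
        rwa [hinj (hx'.trans hx.symm)] at hαx'
    · have hset : ({t : ℝ | ∃ x, f x = y ∧ A x = t} ∪ {0}) = {0} := by
        ext t
        simp only [Set.mem_union, Set.mem_setOf_eq, Set.mem_singleton_iff]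
        constructor
        · rintro (⟨x', hx', rfl⟩ | rfl)
          · exact absurd ⟨x', hx'⟩ h
          · rfl
        · rintro rfl; right; rfl
      rw [hset, csSup_singleton]
      constructor
      · intro hc; exact absurd (lt_of_lt_of_le hα.1 hc) (lt_irrefl 0)
      · rintro ⟨x', hx', _⟩; exact absurd ⟨x', hx'⟩ h
  ext y
  simp only [Set.mem_setOf_eq, key y]
  constructor
  · rintro ⟨x, rfl, hαx⟩
    have hx : x ∈ Set.Icc l r := hlev ▸ hαx
    exact ⟨hfm.monotone hx.1, hfm.monotone hx.2⟩
  · intro hy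
    have := intermediate_value_Icc hlr hfc.continuousOn hy
    obtain ⟨x, hx, hfx⟩ := this
    refine ⟨x, hfx, ?_⟩
    have : x ∈ {x : ℝ | α ≤ A x} := hlev ▸ hx
    exact this
end

section
/- Let A : ℝ → ℝ satisfy 0 ≤ A(x) ≤ 1 for all x, let f : ℝ → ℝ be continuous and strictly decreasing, and define B : ℝ → ℝ by B(y) = sSup ({A(x) : f(x) = y} ∪ {0}). Let α ∈ (0,1] and suppose {x : A(x) ≥ α} = [l, r] for some real numbers l ≤ r. Then {y : B(y) ≥ α} = [f(r), f(l)]; in particular, the endpoints of the α-level of B are obtained by applying f to the endpoints of the α-level of A. -/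
/-- Theorem 1 (decreasing case): if `B` is `f`-correlated to `A` and `f` is
continuous strictly decreasing, the endpoints of the α-level of `B` are obtained
by applying `f` to the endpoints of the α-level of `A`. -/
theorem fCorrelated_level_decreasing (A : ℝ → ℝ)
    (hA : ∀ x, 0 ≤ A x ∧ A x ≤ 1)
    (f : ℝ → ℝ) (hfc : Continuous f) (hfm : StrictAnti f)
    (B : ℝ → ℝ)
    (hB : ∀ y, B y = sSup ({t : ℝ | ∃ x, f x = y ∧ A x = t} ∪ {0}))
    (α : ℝ) (hα : α ∈ Set.Ioc (0:ℝ) 1)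
    (l r : ℝ) (hlr : l ≤ r)
    (hlev : {x : ℝ | α ≤ A x} = Set.Icc l r) :
    {y : ℝ | α ≤ B y} = Set.Icc (f r) (f l) := by
  have hinj : Function.Injective f := hfm.injective
  have hBf : ∀ x, B (f x) = A x := by
    intro x
    have hset : {t : ℝ | ∃ x', f x' = f x ∧ A x' = t} ∪ {0} = {A x, 0} := by
      ext t
      constructor
      · rintro (⟨x', hx', ht⟩ | ht)
        · left; rw [← ht, hinj hx']
        · right; exact ht
      · rintro (ht | ht)
        · left; exact ⟨x, rfl, ht.symm⟩
        · right; exact ht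
    rw [hB, hset, csSup_pair, max_eq_left (hA x).1]
  ext y
  simp only [Set.mem_setOf_eq, Set.mem_Icc]
  constructor
  · intro hy
    by_cases hrange : ∃ x, f x = y
    · obtain ⟨x, rfl⟩ := hrange
      rw [hBf] at hy
      have hx : x ∈ Set.Icc l r := by rw [← hlev]; exact hy
      exact ⟨hfm.antitone hx.2, hfm.antitone hx.1⟩
    · exfalso
      have hset : {t : ℝ | ∃ x, f x = y ∧ A x = t} ∪ {0} = {0} := by
        ext t
        constructor
        · rintro (⟨x, hx, _⟩ | ht)
          · exact absurd ⟨x, hx⟩ hrange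
          · exact ht
        · exact Or.inr
      rw [hB, hset, csSup_singleton] at hy
      exact absurd hy (not_le.mpr hα.1)
  · intro hy
    obtain ⟨x, hx, hfx⟩ := intermediate_value_Icc' hlr hfc.continuousOn hy
    have : α ≤ A x := by have := hlev ▸ hx; exact this
    rw [← hfx, hBf]
    exact this
end

section
/- Let q₋ ≤ q₊ be real numbers, a > 0, b > 0, and let L, R : [0,1] → [0,1] be continuous strictly decreasing functions with L(0) = R(0) = 1 and L(1) = R(1) = 0, with inverse functions ℓ, ρ : [0,1] → [0,1] (so L(ℓ(t)) = t, ℓ(L(t)) = t, R(ρ(t)) = t, ρ(R(t)) = t for all t ∈ [0,1]). Define A : ℝ → ℝ by A(u) = L((q₋ − u)/a) on [q₋ − a, q₋], A(u) = 1 on [q₋, q₊], A(u) = R((u − q₊)/b) on [q₊, q₊ + b], and A(u) = 0 otherwise. Let f : ℝ → ℝ be continuous and strictly increasing, and define B : ℝ → ℝ by B(y) = sSup ({A(x) : f(x) = y} ∪ {0}). Then for every α ∈ (0,1], {y : B(y) ≥ α} = [f(q₋ − a·ℓ(α)), f(q₊ + b·ρ(α))]. -/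
/-- The membership function of an LR-type fuzzy number with parameters
`(qm, qp, a, b)` and shape functions `L`, `R`. -/
noncomputable def LRmem (qm qp a b : ℝ) (L R : ℝ → ℝ) : ℝ → ℝ := fun u =>
  if u ∈ Set.Icc (qm - a) qm then L ((qm - u) / a)
  else if u ∈ Set.Icc qm qp then 1
  else if u ∈ Set.Icc qp (qp + b) then R ((u - qp) / b)
  else 0

/-- If `B` is `f`-correlated to an LR-type fuzzy number `A` with `f` continuous and
strictly increasing, then `[B]^α = [f(q₋ − a ℓ(α)), f(q₊ + b ρ(α))]`. -/
theorem fCorrelated_LR_level (qm qp a b : ℝ) (hq : qm ≤ qp) (ha : 0 < a) (hb : 0 < b)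
    (L R ℓ ρ : ℝ → ℝ)
    (hLmap : ∀ t ∈ Set.Icc (0:ℝ) 1, L t ∈ Set.Icc (0:ℝ) 1)
    (hRmap : ∀ t ∈ Set.Icc (0:ℝ) 1, R t ∈ Set.Icc (0:ℝ) 1)
    (hLcont : ContinuousOn L (Set.Icc 0 1))
    (hRcont : ContinuousOn R (Set.Icc 0 1))
    (hLanti : StrictAntiOn L (Set.Icc 0 1))
    (hRanti : StrictAntiOn R (Set.Icc 0 1))
    (hL0 : L 0 = 1) (hL1 : L 1 = 0) (hR0 : R 0 = 1) (hR1 : R 1 = 0)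
    (hℓmap : ∀ t ∈ Set.Icc (0:ℝ) 1, ℓ t ∈ Set.Icc (0:ℝ) 1)
    (hρmap : ∀ t ∈ Set.Icc (0:ℝ) 1, ρ t ∈ Set.Icc (0:ℝ) 1)
    (hLℓ : ∀ t ∈ Set.Icc (0:ℝ) 1, L (ℓ t) = t)
    (hℓL : ∀ t ∈ Set.Icc (0:ℝ) 1, ℓ (L t) = t)
    (hRρ : ∀ t ∈ Set.Icc (0:ℝ) 1, R (ρ t) = t)
    (hρR : ∀ t ∈ Set.Icc (0:ℝ) 1, ρ (R t) = t)
    (f : ℝ → ℝ) (hfc : Continuous f) (hfm : StrictMono f)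
    (B : ℝ → ℝ)
    (hB : ∀ y, B y = sSup ({t : ℝ | ∃ x, f x = y ∧ LRmem qm qp a b L R x = t} ∪ {0}))
    (α : ℝ) (hα : α ∈ Set.Ioc (0:ℝ) 1) :
    {y : ℝ | α ≤ B y} = Set.Icc (f (qm - a * ℓ α)) (f (qp + b * ρ α)) := by
  obtain ⟨hα0, hα1⟩ := hα
  have hαIcc : α ∈ Set.Icc (0:ℝ) 1 := ⟨hα0.le, hα1⟩
  obtain ⟨hℓ0, hℓ1⟩ := hℓmap α hαIcc
  obtain ⟨hρ0, hρ1⟩ := hρmap α hαIcc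
  set u : ℝ := qm - a * ℓ α with hu
  set v : ℝ := qp + b * ρ α with hv
  have hu1 : qm - a ≤ u := by nlinarith
  have hu2 : u ≤ qm := by nlinarith
  have hv1 : qp ≤ v := by nlinarith
  have hv2 : v ≤ qp + b := by nlinarith
  have huv : u ≤ v := by linarith
  -- level set of A
  have hlev : ∀ x, α ≤ LRmem qm qp a b L R x ↔ x ∈ Set.Icc u v := by
    intro x
    unfold LRmem
    split_ifs with h1 h2 h3
    · obtain ⟨hx1, hx2⟩ := h1
      have hs : (qm - x) / a ∈ Set.Icc (0:ℝ) 1 :=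
        ⟨div_nonneg (by linarith) ha.le, by rw [div_le_one ha]; linarith⟩
      constructor
      · intro hax
        have hle : (qm - x) / a ≤ ℓ α := by
          by_contra hlt
          push_neg at hlt
          have := hLanti (hℓmap α hαIcc) hs hlt
          rw [hLℓ α hαIcc] at this
          linarith
        have := (div_le_iff₀ ha).mp hle
        constructor
        · nlinarith
        · linarith
      · rintro ⟨hxu, hxv⟩
        have hle : (qm - x) / a ≤ ℓ α := by
          rw [div_le_iff₀ ha]; nlinarith
        have := hLanti.antitoneOn hs (hℓmap α hαIcc) hle
        rw [hLℓ α hαIcc] at this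
        exact this
    · constructor
      · intro _
        exact ⟨by linarith [h2.1], by linarith [h2.2]⟩
      · intro _; linarith
    · obtain ⟨hx1, hx2⟩ := h3
      have hs : (x - qp) / b ∈ Set.Icc (0:ℝ) 1 :=
        ⟨div_nonneg (by linarith) hb.le, by rw [div_le_one hb]; linarith⟩
      constructor
      · intro hax
        have hle : (x - qp) / b ≤ ρ α := by
          by_contra hlt
          push_neg at hlt
          have := hRanti (hρmap α hαIcc) hs hlt
          rw [hRρ α hαIcc] at this
          linarith
        have := (div_le_iff₀ hb).mp hle
        constructor
        · linarith
        · nlinarith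
      · rintro ⟨hxu, hxv⟩
        have hle : (x - qp) / b ≤ ρ α := by
          rw [div_le_iff₀ hb]; nlinarith
        have := hRanti.antitoneOn hs (hρmap α hαIcc) hle
        rw [hRρ α hαIcc] at this
        exact this
    · simp only [Set.mem_Icc, not_and, not_le] at h1 h2 h3
      constructor
      · intro h; linarith
      · rintro ⟨hxu, hxv⟩
        exfalso
        rcases le_or_gt x qm with hc | hc
        · exact absurd (h1 (by linarith)) (not_lt.mpr hc)
        · rcases le_or_gt x qp with hc2 | hc2
          · exact absurd (h2 hc.le) (not_lt.mpr hc2)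
          · exact absurd (h3 hc2.le) (not_lt.mpr (by linarith))
  have hA0 : ∀ x, 0 ≤ LRmem qm qp a b L R x := by
    intro x
    unfold LRmem
    split_ifs with h1 h2 h3
    · exact (hLmap _ ⟨div_nonneg (by linarith [h1.2]) ha.le,
        by rw [div_le_one ha]; linarith [h1.1]⟩).1
    · linarith
    · exact (hRmap _ ⟨div_nonneg (by linarith [h3.1]) hb.le,
        by rw [div_le_one hb]; linarith [h3.2]⟩).1
    · exact le_refl 0
  have hBf : ∀ x, B (f x) = LRmem qm qp a b L R x := by
    intro x
    rw [hB]
    have hset : {t : ℝ | ∃ x', f x' = f x ∧ LRmem qm qp a b L R x' = t}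
        = {LRmem qm qp a b L R x} := by
      ext t
      simp [hfm.injective.eq_iff, eq_comm]
    rw [hset, Set.singleton_union, csSup_pair]
    exact sup_eq_left.mpr (hA0 x)
  have hB0 : ∀ y, y ∉ Set.range f → B y = 0 := by
    intro y hy
    rw [hB]
    have hset : {t : ℝ | ∃ x, f x = y ∧ LRmem qm qp a b L R x = t} = ∅ := by
      ext t
      simp only [Set.mem_setOf_eq, Set.mem_empty_iff_false, iff_false]
      rintro ⟨x, hfx, -⟩
      exact hy ⟨x, hfx⟩
    rw [hset, Set.empty_union, csSup_singleton]
  have himg : {y : ℝ | α ≤ B y} = f '' Set.Icc u v := by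
    ext y
    constructor
    · intro hy
      by_cases hr : y ∈ Set.range f
      · obtain ⟨x, rfl⟩ := hr
        rw [Set.mem_setOf_eq, hBf] at hy
        exact ⟨x, (hlev x).1 hy, rfl⟩
      · rw [Set.mem_setOf_eq, hB0 y hr] at hy
        linarith
    · rintro ⟨x, hx, rfl⟩
      show α ≤ B (f x)
      rw [hBf]
      exact (hlev x).2 hx
  rw [himg]
  apply Set.Subset.antisymm
  · rintro _ ⟨x, hx, rfl⟩
    exact ⟨hfm.monotone hx.1, hfm.monotone hx.2⟩
  · exact intermediate_value_Icc huv hfc.continuousOn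
end

section
/- Let A : ℝ → ℝ satisfy 0 ≤ A(x) ≤ 1 for all x, let q > 0 and s ∈ ℝ, and define B : ℝ → ℝ by B(y) = sSup ({A(x) : x ≠ 0 and q/x + s = y} ∪ {0}). Let α ∈ (0,1] and suppose {x : A(x) ≥ α} = [l, r] with 0 < l ≤ r. Then {y : B(y) ≥ α} = [q/r + s, q/l + s]; in other words, the α-level of B is {q/x + s : x ∈ [l, r]}. -/
/-- If `B` is hyperbolically interactive with `A` via `y = q/x + s` with `q > 0`,
and `[A]^α = [l, r] ⊆ (0, ∞)`, then `[B]^α = [q/r + s, q/l + s]`. -/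
theorem hyperbolic_level (A : ℝ → ℝ)
    (hA : ∀ x, 0 ≤ A x ∧ A x ≤ 1)
    (q s : ℝ) (hq : 0 < q)
    (B : ℝ → ℝ)
    (hB : ∀ y, B y = sSup ({t : ℝ | ∃ x, x ≠ 0 ∧ q / x + s = y ∧ A x = t} ∪ {0}))
    (α : ℝ) (hα : α ∈ Set.Ioc (0:ℝ) 1)
    (l r : ℝ) (hl : 0 < l) (hlr : l ≤ r)
    (hlev : {x : ℝ | α ≤ A x} = Set.Icc l r) :
    {y : ℝ | α ≤ B y} = Set.Icc (q / r + s) (q / l + s) := by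
  obtain ⟨hα0, hα1⟩ := hα
  have hr : 0 < r := lt_of_lt_of_le hl hlr
  ext y
  simp only [Set.mem_setOf_eq, hB]
  by_cases hys : y = s
  · have hset : {t : ℝ | ∃ x, x ≠ 0 ∧ q / x + s = y ∧ A x = t} ∪ {0} = ({0} : Set ℝ) := by
      ext t
      simp only [Set.mem_union, Set.mem_setOf_eq, Set.mem_singleton_iff]
      constructor
      · rintro (⟨x, hx, hxy, rfl⟩ | h)
        · exfalso
          have h0 : q / x = 0 := by rw [hys] at hxy; linarith
          rcases div_eq_zero_iff.mp h0 with h | h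
          · exact hq.ne' h
          · exact hx h
        · exact h
      · intro h; right; exact h
    rw [hset, csSup_singleton]
    have hqr : 0 < q / r := div_pos hq hr
    constructor
    · intro h; linarith
    · intro h; have := h.1; rw [hys] at this; linarith
  · have hys' : y - s ≠ 0 := sub_ne_zero.mpr hys
    set x₀ := q / (y - s) with hx₀
    have hx₀ne : x₀ ≠ 0 := div_ne_zero hq.ne' hys'
    have hqx₀ : q / x₀ = y - s := by
      rw [hx₀]; field_simp
    have hset : {t : ℝ | ∃ x, x ≠ 0 ∧ q / x + s = y ∧ A x = t} ∪ {0}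
        = ({A x₀, 0} : Set ℝ) := by
      ext t
      simp only [Set.mem_union, Set.mem_setOf_eq, Set.mem_insert_iff,
        Set.mem_singleton_iff]
      constructor
      · rintro (⟨x, hx, hxy, rfl⟩ | h)
        · left
          have hqx : q / x = y - s := by linarith
          have hx' : x = x₀ := by
            have : q = (y - s) * x := (div_eq_iff hx).mp hqx
            rw [hx₀]
            field_simp
            linarith
          rw [hx']
        · right; exact h
      · rintro (rfl | rfl)
        · exact Or.inl ⟨x₀, hx₀ne, by linarith, rfl⟩
        · right; rfl
    rw [hset, csSup_pair, max_eq_left (hA x₀).1]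
    have hmem : (α ≤ A x₀) ↔ x₀ ∈ Set.Icc l r := by
      rw [← hlev]; exact Iff.rfl
    rw [hmem]
    constructor
    · rintro ⟨h1, h2⟩
      have hx₀pos : 0 < x₀ := lt_of_lt_of_le hl h1
      have hys0 : 0 < y - s := by
        have : 0 < q / x₀ := div_pos hq hx₀pos
        linarith
      constructor
      · have : q / r ≤ q / x₀ := div_le_div_of_nonneg_left hq.le hx₀pos h2
        rw [hqx₀] at this; linarith
      · have : q / x₀ ≤ q / l := div_le_div_of_nonneg_left hq.le hl h1
        rw [hqx₀] at this; linarith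
    · rintro ⟨h1, h2⟩
      have hys0 : 0 < y - s := by
        have : 0 < q / r := div_pos hq hr
        linarith
      constructor
      · -- l ≤ x₀ since y - s ≤ q / l
        have h2' : y - s ≤ q / l := by linarith
        have : q / (q / l) ≤ q / (y - s) :=
          div_le_div_of_nonneg_left hq.le hys0 h2'
        have hql : q / (q / l) = l := by field_simp
        rw [hql] at this
        exact this
      · have h1' : q / r ≤ y - s := by linarith
        have : q / (y - s) ≤ q / (q / r) :=
          div_le_div_of_nonneg_left hq.le (div_pos hq hr) h1'
        have hqr : q / (q / r) = r := by field_simp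
        rw [hqr] at this
        exact this
end
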